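/- (Least action principle, minimization form) Let N be an abelian network with total alphabet A, and suppose N halts on input x.q with x ∈ ℕ^A. Then for each letter a ∈ A, the odometer coordinate satisfies [x.q]_a = min{ |w'|_a : w' is a complete execution for x.q }; that is, every complete legal execution achieves, in every coordinate simultaneously, the minimum number of processings over all complete executions. -/

import Mathlib

/-- The letter-count vector `|w| ∈ ℕ^A` of a word `w ∈ A^*`. -/
def lc {A : Type*} [DecidableEq A] (w : List A) : A → ℕ := fun a => w.count a

/-- An abelian-network *data* structure on a directed graph with vertex set `V`, edge set `E`
(with source and target maps, allowing loops and multiple edges), total alphabet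
`A = ⊔_v A_v` (the letter `a` belongs to the alphabet of the vertex `loc a`), and
state space `Q v` for the processor at vertex `v`.  The abelian hypothesis on the
processors is the separate predicate `AbelianNetwork.IsAbelian`. -/
structure AbelianNetwork (V E A : Type*) (Q : V → Type*) [DecidableEq V] [DecidableEq A] where
  /-- source of an edge -/
  src : E → V
  /-- target of an edge -/
  tgt : E → V
  /-- the vertex whose input alphabet contains the letter `a` -/
  loc : A → V
  /-- the (finitely many) outgoing edges of each vertex -/
  outEdges : V → Finset E
  mem_outEdges : ∀ (e : E) (v : V), e ∈ outEdges v ↔ src e = v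
  /-- single-letter transition function `T_v(a, ·)` of the processor at `v = loc a` -/
  trans : (a : A) → Q (loc a) → Q (loc a)
  /-- message-passing function: the word sent along the edge `e` (with `src e = loc a`)
  when the processor at `loc a` processes the letter `a` in state `q` -/
  msg : (e : E) → (a : A) → Q (loc a) → List A
  /-- letters sent along `e` belong to the alphabet of the target of `e` -/
  msg_tgt : ∀ (e : E) (a : A) (q : Q (loc a)), src e = loc a → ∀ b ∈ msg e a q, loc b = tgt e

namespace AbelianNetwork

variable {V E A : Type*} {Q : V → Type*} [DecidableEq V] [DecidableEq A]
variable (N : AbelianNetwork V E A Q)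

/-- The map `t_a : Q → Q` updating the `loc a` coordinate by `T_{loc a}(a, ·)` and
fixing all other coordinates. -/
def tact (a : A) (q : ∀ v, Q v) : ∀ v, Q v :=
  Function.update q (N.loc a) (N.trans a (q (N.loc a)))

/-- `t_w = t_{w_r} ∘ ⋯ ∘ t_{w_1}` for a word `w = w_1 ⋯ w_r`. -/
def tword (w : List A) (q : ∀ v, Q v) : ∀ v, Q v :=
  w.foldl (fun q a => N.tact a q) q

/-- The word sent along the edge `e` when the letters of `w` are processed in order,
starting from the global state `q`.  (Extends the message-passing functions to words.) -/
def msgword (e : E) : List A → (∀ v, Q v) → List A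
  | [], _ => []
  | a :: w, q =>
      (if N.src e = N.loc a then N.msg e a (q (N.loc a)) else []) ++ msgword e w (N.tact a q)

/-- `N(a, q_{loc a}) ∈ ℕ^A`: the vector counting the letters produced when the processor at
`loc a` processes the letter `a`, summed over the outgoing edges of `loc a`. -/
def Nletter (a : A) (q : ∀ v, Q v) : A → ℕ := fun b =>
  ∑ e ∈ N.outEdges (N.loc a), (N.msg e a (q (N.loc a))).count b

/-- `N(w, q) = ∑_i N(w_i, q^{i-1}_{v(i)})` for a word `w = w_1 ⋯ w_r`. -/
def Nword : List A → (∀ v, Q v) → A → ℕ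
  | [], _ => fun _ => 0
  | a :: w, q => fun b => N.Nletter a q b + Nword w (N.tact a q) b

/-- The network is *abelian*: permuting a word input to a single processor does not change
the resulting state and changes each output word only by permuting its letters. -/
def IsAbelian : Prop :=
  ∀ (v : V) (w w' : List A), (∀ a ∈ w, N.loc a = v) → (∀ a ∈ w', N.loc a = v) →
    (w : Multiset A) = (w' : Multiset A) →
    ∀ q : ∀ u, Q u,
      N.tword w q = N.tword w' q ∧
      ∀ e : E, ((N.msgword e w q : Multiset A) = (N.msgword e w' q : Multiset A))

/-- The state transition `π_a(x.q) = (x - 1_a + N(a, q_{loc a})).t_a(q)` of the whole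
network, viewed as a single automaton with states `x.q ∈ ℤ^A × Q`. -/
def piLetter (a : A) (s : (A → ℤ) × (∀ v, Q v)) : (A → ℤ) × (∀ v, Q v) :=
  (fun b => s.1 b - (if b = a then 1 else 0) + (N.Nletter a s.2 b : ℤ), N.tact a s.2)

/-- `π_w = π_{w_r} ∘ ⋯ ∘ π_{w_1}`. -/
def piWord (w : List A) (s : (A → ℤ) × (∀ v, Q v)) : (A → ℤ) × (∀ v, Q v) :=
  w.foldl (fun s a => N.piLetter a s) s

/-- The word `w` is a *legal execution* from `x.q`: each letter is a legal move
(`x_a ≥ 1`) from the state obtained by executing the previous letters. -/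
def Legal : List A → ((A → ℤ) × (∀ v, Q v)) → Prop
  | [], _ => True
  | a :: w, s => 1 ≤ s.1 a ∧ Legal w (N.piLetter a s)

/-- The word `w` is a *complete execution* from `x.q`: after executing `w`,
no letters remain to be processed. -/
def Complete (w : List A) (s : (A → ℤ) × (∀ v, Q v)) : Prop :=
  ∀ a : A, (N.piWord w s).1 a ≤ 0

/-- A canonical word with letter-count vector `u ∈ ℕ^A`. -/
noncomputable def vecWord [Fintype A] (u : A → ℕ) : List A :=
  (Finset.univ : Finset A).toList.flatMap fun a => List.replicate (u a) a

/-- `N(u, q)` for a vector `u ∈ ℕ^A`, defined as `N(w, q)` for a word `w` with `|w| = u`. -/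
noncomputable def Nvec [Fintype A] (u : A → ℕ) (q : ∀ v, Q v) : A → ℕ := N.Nword (vecWord u) q

end AbelianNetwork

/-!
The moves `π_a` of an abelian network commute, so a complete execution `w'` may be reordered to
begin with any letter `b` it contains. If `b` is legal at `x.q` (`x_b ≥ 1`), then `b` does occur
in `w'`, because executing `w'` lowers the `b`-coordinate by at most `|w'|_b`. Peeling `b` off
the front of a legal execution and of `w'` and inducting gives `|w|_a ≤ |w'|_a` for every `a`.
-/

namespace AbelianNetwork

variable {V E A : Type*} {Q : V → Type*} [DecidableEq V] [DecidableEq A]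
variable (N : AbelianNetwork V E A Q)

lemma Nword_eq_sum_count_msgword {v : V} {w : List A} (hw : ∀ a ∈ w, N.loc a = v)
    (q : ∀ v, Q v) (c : A) :
    N.Nword w q c = ∑ e ∈ N.outEdges v, (N.msgword e w q).count c := by
  induction w generalizing q with
  | nil => simp [Nword, msgword]
  | cons a w ih =>
    have hav : N.loc a = v := hw a List.mem_cons_self
    change N.Nletter a q c + N.Nword w (N.tact a q) c = _
    rw [ih (fun b hb => hw b (List.mem_cons_of_mem a hb)), Nletter]
    subst hav
    rw [← Finset.sum_add_distrib]
    refine Finset.sum_congr rfl fun e he => ?_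
    have hsrc : N.src e = N.loc a := (N.mem_outEdges e _).1 he
    simp [msgword, hsrc]

lemma Nword_eq_of_perm (hN : N.IsAbelian) {v : V} {w w' : List A}
    (hw : ∀ a ∈ w, N.loc a = v) (hw' : ∀ a ∈ w', N.loc a = v) (hp : w.Perm w')
    (q : ∀ v, Q v) : N.Nword w q = N.Nword w' q := by
  ext c
  rw [N.Nword_eq_sum_count_msgword hw, N.Nword_eq_sum_count_msgword hw']
  refine Finset.sum_congr rfl fun e _ => ?_
  simpa using congrArg (Multiset.count c) ((hN v w w' hw hw' (Multiset.coe_eq_coe.2 hp) q).2 e)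

lemma tact_comm (hN : N.IsAbelian) (a b : A) (q : ∀ v, Q v) :
    N.tact a (N.tact b q) = N.tact b (N.tact a q) := by
  by_cases h : N.loc a = N.loc b
  · simpa [tword] using
      (hN (N.loc a) [b, a] [a, b] (by simp [h]) (by simp [h])
        (Multiset.coe_eq_coe.2 (List.Perm.swap a b [])) q).1
  · unfold tact
    rw [Function.update_of_ne h, Function.update_of_ne (Ne.symm h)]
    exact Function.update_comm (Ne.symm h) _ _ _

lemma Nletter_tact_of_loc_ne {a b : A} (h : N.loc a ≠ N.loc b) (q : ∀ v, Q v) :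
    N.Nletter a (N.tact b q) = N.Nletter a q := by
  unfold Nletter tact
  rw [Function.update_of_ne h]

lemma piLetter_comm (hN : N.IsAbelian) (a b : A) (s : (A → ℤ) × (∀ v, Q v)) :
    N.piLetter a (N.piLetter b s) = N.piLetter b (N.piLetter a s) := by
  refine Prod.ext (funext fun c => ?_) (N.tact_comm hN a b s.2)
  simp only [piLetter]
  by_cases h : N.loc a = N.loc b
  · have hpair := congrFun (N.Nword_eq_of_perm hN (v := N.loc a) (w := [b, a]) (w' := [a, b])
      (by simp [h]) (by simp [h]) (List.Perm.swap a b []) s.2) c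
    simp only [Nword] at hpair
    omega
  · rw [N.Nletter_tact_of_loc_ne h, N.Nletter_tact_of_loc_ne (Ne.symm h)]
    ring

lemma piWord_cons (a : A) (w : List A) (s : (A → ℤ) × (∀ v, Q v)) :
    N.piWord (a :: w) s = N.piWord w (N.piLetter a s) := rfl

lemma piWord_eq_of_perm (hN : N.IsAbelian) {w w' : List A} (hp : w.Perm w')
    (s : (A → ℤ) × (∀ v, Q v)) : N.piWord w s = N.piWord w' s :=
  hp.foldl_eq' (fun a _ b _ s => N.piLetter_comm hN b a s) s

lemma sub_count_le_piWord_fst (w : List A) (s : (A → ℤ) × (∀ v, Q v)) (a : A) :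
    s.1 a - w.count a ≤ (N.piWord w s).1 a := by
  induction w generalizing s with
  | nil => simp [piWord]
  | cons b w ih =>
    refine le_trans ?_ (ih (N.piLetter b s))
    have hprod : (0 : ℤ) ≤ N.Nletter b s.2 a := Int.natCast_nonneg _
    by_cases hab : a = b
    · subst hab
      simp only [piLetter, List.count_cons_self, if_true]
      push_cast
      omega
    · simp only [piLetter, List.count_cons_of_ne (Ne.symm hab), if_neg hab]
      omega

lemma mem_of_complete {w : List A} {s : (A → ℤ) × (∀ v, Q v)} (hc : N.Complete w s)
    {b : A} (hb : 1 ≤ s.1 b) : b ∈ w := by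
  by_contra hbw
  have := N.sub_count_le_piWord_fst w s b
  rw [List.count_eq_zero_of_not_mem hbw, Nat.cast_zero, sub_zero] at this
  have hcb : (N.piWord w s).1 b ≤ 0 := hc b
  omega

lemma complete_erase (hN : N.IsAbelian) {w : List A} {s : (A → ℤ) × (∀ v, Q v)}
    (hc : N.Complete w s) {b : A} (hb : b ∈ w) : N.Complete (w.erase b) (N.piLetter b s) := by
  intro c
  simpa [Complete, piWord_cons, N.piWord_eq_of_perm hN (List.perm_cons_erase hb)] using hc c

lemma count_le_of_legal_of_complete (hN : N.IsAbelian) {w w' : List A}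
    {s : (A → ℤ) × (∀ v, Q v)} (hl : N.Legal w s) (hc : N.Complete w' s) (a : A) :
    w.count a ≤ w'.count a := by
  induction w generalizing s w' with
  | nil => simp
  | cons b w ih =>
    obtain ⟨hb, hl⟩ := hl
    have hbw' := N.mem_of_complete hc hb
    have hle := ih hl (N.complete_erase hN hc hbw')
    have hpos : 0 < w'.count b := List.count_pos_iff.2 hbw'
    by_cases hab : a = b
    · subst hab
      rw [List.count_erase_self] at hle
      rw [List.count_cons_self]
      omega
    · rw [List.count_cons_of_ne (Ne.symm hab)]
      rwa [List.count_erase_of_ne hab] at hle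

end AbelianNetwork

/-- **Least action principle, minimization form.** Suppose the abelian network `N` halts on
input `x.q` with `x ∈ ℕ^A`, and let `w` be a complete legal execution (so `[x.q] = |w|`).
Then for each letter `a ∈ A`, the odometer coordinate `[x.q]_a = |w|_a` is the minimum of
`|w'|_a` over all complete executions `w'` for `x.q`: every complete legal execution
achieves, in every coordinate simultaneously, the minimum number of processings over all
complete executions. -/
theorem AbelianNetwork.odometer_isLeast {V E A : Type*} {Q : V → Type*}
    [DecidableEq V] [DecidableEq A] (N : AbelianNetwork V E A Q) (hN : N.IsAbelian)
    (x : A → ℕ) (q : ∀ v, Q v) (w : List A)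
    (hwl : N.Legal w (fun a => (x a : ℤ), q))
    (hwc : N.Complete w (fun a => (x a : ℤ), q)) :
    ∀ a : A, IsLeast
      {n : ℕ | ∃ w' : List A, N.Complete w' (fun b => (x b : ℤ), q) ∧ lc w' a = n}
      (lc w a) := by
  intro a
  refine ⟨⟨w, hwc, rfl⟩, ?_⟩
  rintro n ⟨w', hw'c, rfl⟩
  exact N.count_le_of_legal_of_complete hN hwl hw'c a
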